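/- arXiv:2308.08958 — 4 statements merged into one kernel-verified Lean document; each statement's English description precedes it below -/
import Mathlib

section
/- Let X be a T×K real matrix of full column rank, Γ a T×T matrix with ‖Γ‖ < 1, P = X(XᵀX)⁻¹Xᵀ, M = I−P, A_Γ = (I−Γ)⁻¹Γ, and M_Γ = I − X(Xᵀ(I−Γ)X)⁻¹Xᵀ(I−Γ). Then (I−Γ)M_Γ = M(I + A_Γ M)⁻¹. -/
/-!
Write `S = 1 - Γ`, `L = X(XᵀSX)⁻¹Xᵀ`, so that `M_Γ = 1 - LS`, and `N = 1 + A_Γ M = P + S⁻¹M`.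
Since `LSX = X` and `XᵀP = Xᵀ`, one has `LSP = P` and `LP = L`, and expanding gives
`S M_Γ N = M` and `(S M_Γ + LS) N = 1`; so `N` is invertible and `S M_Γ = M N⁻¹`.
The matrices `S`, `XᵀX` and `XᵀSX` are invertible because `uᵀSu ≥ (1 - ‖Γ‖)‖u‖² > 0`
for `u ≠ 0` and `X` is injective.
-/

open Matrix

namespace Matrix

variable {m n : Type*} [Fintype n]

theorem mulVec_injective_of_rank_eq_card {K : Type*} [Field K] {X : Matrix m n K}
    (hX : X.rank = Fintype.card n) : Function.Injective X.mulVec := by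
  rw [mulVec_injective_iff, linearIndependent_iff_card_eq_finrank_span, ← hX,
    rank_eq_finrank_span_cols]
  rfl

variable [DecidableEq n]

section Algebra

variable {R : Type*} [CommRing R] {Γ s L P : Matrix n n R}

theorem mul_one_sub_mul_eq_one_sub_mul_inv (hsS : s * (1 - Γ) = 1) (hSs : (1 - Γ) * s = 1)
    (hLP : L * P = L) (hLSP : L * (1 - Γ) * P = P) :
    (1 - Γ) * (1 - L * (1 - Γ)) = (1 - P) * (1 + s * Γ * (1 - P))⁻¹ := by
  have hN : 1 + s * Γ * (1 - P) = P + s * (1 - P) := by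
    have hsΓ : s * Γ = s - s * (1 - Γ) := by noncomm_ring
    rw [hsΓ, hsS]
    noncomm_ring
  rw [hN]
  generalize 1 - Γ = S at hsS hSs hLSP ⊢
  have hres : S * (1 - L * S) * (P + s * (1 - P)) = 1 - P :=
    calc S * (1 - L * S) * (P + s * (1 - P))
        = S * (P - L * S * P) + S * s * (1 - P) - S * (L * (S * s) - L * (S * s) * P) := by
          noncomm_ring
      _ = 1 - P := by rw [hLSP, hSs, mul_one, hLP]; noncomm_ring
  have hinv : (S * (1 - L * S) + L * S) * (P + s * (1 - P)) = 1 :=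
    calc (S * (1 - L * S) + L * S) * (P + s * (1 - P))
        = S * (1 - L * S) * (P + s * (1 - P)) + (L * S * P + L * (S * s) - L * (S * s) * P) := by
          noncomm_ring
      _ = 1 := by rw [hres, hLSP, hSs, mul_one, hLP]; noncomm_ring
  rw [inv_eq_left_inv hinv]
  calc S * (1 - L * S)
      = S * (1 - L * S) * ((P + s * (1 - P)) * (S * (1 - L * S) + L * S)) := by
        rw [mul_eq_one_comm.mp hinv, Matrix.mul_one]
    _ = (1 - P) * (S * (1 - L * S) + L * S) := by rw [← Matrix.mul_assoc, hres]

end Algebra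

section Positivity

variable {𝕜 : Type*} [Field 𝕜] [PartialOrder 𝕜]

theorem isUnit_of_dotProduct_mulVec_pos {A : Matrix n n 𝕜} (hA : ∀ u ≠ 0, 0 < u ⬝ᵥ A *ᵥ u) :
    IsUnit A := by
  rw [← mulVec_injective_iff_isUnit]
  intro v w hvw
  by_contra hne
  simpa [mulVec_sub, hvw] using hA (v - w) (sub_ne_zero.mpr hne)

theorem isUnit_transpose_mul_mul_of_dotProduct_mulVec_pos [Fintype m] [DecidableEq m]
    {X : Matrix m n 𝕜} {A : Matrix m m 𝕜} (hX : Function.Injective X.mulVec)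
    (hA : ∀ u ≠ 0, 0 < u ⬝ᵥ A *ᵥ u) :
    IsUnit (Xᵀ * A * X) := by
  refine isUnit_of_dotProduct_mulVec_pos fun u hu => ?_
  have hXu : X *ᵥ u ≠ 0 := fun h => hu (hX (h.trans (mulVec_zero X).symm))
  simpa [← mulVec_mulVec, dotProduct_mulVec, vecMul_transpose] using hA _ hXu

end Positivity

theorem dotProduct_one_sub_mulVec_pos {Γ : Matrix n n ℝ} (hΓ : ‖toEuclideanCLM (𝕜 := ℝ) Γ‖ < 1)
    {u : n → ℝ} (hu : u ≠ 0) : 0 < u ⬝ᵥ (1 - Γ) *ᵥ u := by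
  set e : EuclideanSpace ℝ n := WithLp.toLp 2 u
  have he : 0 < ‖e‖ := norm_pos_iff.mpr fun h => hu (by simpa [e] using congrArg WithLp.ofLp h)
  have huu : u ⬝ᵥ u = ‖e‖ ^ 2 := by
    rw [← real_inner_self_eq_norm_sq, EuclideanSpace.inner_eq_star_dotProduct]
    simp [e]
  have huΓu : u ⬝ᵥ Γ *ᵥ u ≤ ‖toEuclideanCLM (𝕜 := ℝ) Γ‖ * ‖e‖ ^ 2 :=
    calc u ⬝ᵥ Γ *ᵥ u = inner ℝ e (toEuclideanCLM (𝕜 := ℝ) Γ e) :=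
          (inner_toEuclideanCLM Γ e e).symm
      _ ≤ ‖e‖ * ‖toEuclideanCLM (𝕜 := ℝ) Γ e‖ := real_inner_le_norm _ _
      _ ≤ ‖e‖ * (‖toEuclideanCLM (𝕜 := ℝ) Γ‖ * ‖e‖) := by
        gcongr; exact ContinuousLinearMap.le_opNorm _ e
      _ = ‖toEuclideanCLM (𝕜 := ℝ) Γ‖ * ‖e‖ ^ 2 := by ring
  rw [sub_mulVec, one_mulVec, dotProduct_sub, huu]
  nlinarith [pow_pos he 2]

end Matrix

/-- With `P = X(XᵀX)⁻¹Xᵀ`, `M = I−P`, `A_Γ = (I−Γ)⁻¹Γ`, and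
`M_Γ = I − X(Xᵀ(I−Γ)X)⁻¹Xᵀ(I−Γ)`, one has `(I−Γ)M_Γ = M(I + A_Γ M)⁻¹`. -/
theorem oblique_residual_identity {T K : ℕ}
    (X : Matrix (Fin T) (Fin K) ℝ) (Γ : Matrix (Fin T) (Fin T) ℝ)
    (hX : X.rank = K) (hΓ : ‖toEuclideanCLM (𝕜 := ℝ) Γ‖ < 1)
    (P M AΓ MΓ : Matrix (Fin T) (Fin T) ℝ)
    (hP : P = X * (Xᵀ * X)⁻¹ * Xᵀ) (hM : M = 1 - P)
    (hA : AΓ = (1 - Γ)⁻¹ * Γ)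
    (hMΓ : MΓ = 1 - X * (Xᵀ * (1 - Γ) * X)⁻¹ * (Xᵀ * (1 - Γ))) :
    (1 - Γ) * MΓ = M * (1 + AΓ * M)⁻¹ := by
  have hXinj : Function.Injective X.mulVec :=
    mulVec_injective_of_rank_eq_card (by rwa [Fintype.card_fin])
  have hpos : ∀ u ≠ 0, 0 < u ⬝ᵥ (1 - Γ) *ᵥ u := fun _ hu => dotProduct_one_sub_mulVec_pos hΓ hu
  have hS := (isUnit_iff_isUnit_det _).mp (isUnit_of_dotProduct_mulVec_pos hpos)
  have hB := (isUnit_iff_isUnit_det _).mp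
    (isUnit_transpose_mul_mul_of_dotProduct_mulVec_pos hXinj hpos)
  have hG : IsUnit (Xᵀ * X).det := by
    have h1 : ∀ u ≠ 0, 0 < u ⬝ᵥ (1 : Matrix (Fin T) (Fin T) ℝ) *ᵥ u := fun u hu => by
      simpa using dotProduct_star_self_pos_iff.mpr hu
    simpa using (isUnit_iff_isUnit_det _).mp
      (isUnit_transpose_mul_mul_of_dotProduct_mulVec_pos hXinj h1)
  set L := X * (Xᵀ * (1 - Γ) * X)⁻¹ * Xᵀ
  have hLP : L * P = L := by
    rw [hP]
    calc L * (X * (Xᵀ * X)⁻¹ * Xᵀ)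
        = X * (Xᵀ * (1 - Γ) * X)⁻¹ * (Xᵀ * X * (Xᵀ * X)⁻¹) * Xᵀ := by
          simp only [L, Matrix.mul_assoc]
      _ = L := by rw [mul_nonsing_inv _ hG, Matrix.mul_one]
  have hLSP : L * (1 - Γ) * P = P := by
    rw [hP]
    calc L * (1 - Γ) * (X * (Xᵀ * X)⁻¹ * Xᵀ)
        = X * ((Xᵀ * (1 - Γ) * X)⁻¹ * (Xᵀ * (1 - Γ) * X)) * (Xᵀ * X)⁻¹ * Xᵀ := by
          simp only [L, Matrix.mul_assoc]
      _ = X * (Xᵀ * X)⁻¹ * Xᵀ := by rw [nonsing_inv_mul _ hB, Matrix.mul_one]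
  rw [hMΓ, hM, hA, ← Matrix.mul_assoc (X * (Xᵀ * (1 - Γ) * X)⁻¹)]
  exact mul_one_sub_mul_eq_one_sub_mul_inv (nonsing_inv_mul _ hS) (mul_nonsing_inv _ hS) hLP hLSP
end

section
/- Let X be a T×K real matrix of full column rank and Γ a T×T matrix with ‖Γ‖ < 1. Set M_Γ = I − X(Xᵀ(I−Γ)X)⁻¹Xᵀ(I−Γ). Then the matrix (I−Γ)M_Γ + M_Γᵀ(I−Γᵀ) is positive semi-definite. -/
/-!
Write `B = 1 - Γ` and `M = 1 - X (XᵀBX)⁻¹ XᵀB`. As `‖Γ‖ ≤ 1`, the quadratic form of `B` is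
nonnegative. Since `XᵀBM = 0` we get `MᵀBM = BM`, so `xᵀBMx = (Mx)ᵀB(Mx) ≥ 0`, and
`(1 - Γ)M + Mᵀ(1 - Γᵀ) = BM + (BM)ᵀ` is the symmetrization of a matrix with nonnegative
quadratic form.
-/

open Matrix

open scoped RealInnerProductSpace

namespace Matrix

variable {m n R : Type*} [Fintype m] [Fintype n]

theorem dotProduct_mulVec_le_norm_toEuclideanCLM_mul [DecidableEq n] (A : Matrix n n ℝ)
    (x : n → ℝ) : x ⬝ᵥ A *ᵥ x ≤ ‖toEuclideanCLM (𝕜 := ℝ) A‖ * (x ⬝ᵥ x) := by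
  set u : EuclideanSpace ℝ n := WithLp.toLp 2 x
  have hu : x ⬝ᵥ x = ‖u‖ * ‖u‖ := by
    rw [← real_inner_self_eq_norm_mul_norm, EuclideanSpace.inner_toLp_toLp, star_trivial]
  calc x ⬝ᵥ A *ᵥ x = ⟪u, toEuclideanCLM (𝕜 := ℝ) A u⟫ := (inner_toEuclideanCLM A u u).symm
    _ ≤ ‖u‖ * (‖toEuclideanCLM (𝕜 := ℝ) A‖ * ‖u‖) :=
      (real_inner_le_norm _ _).trans (by gcongr; exact ContinuousLinearMap.le_opNorm _ _)
    _ = ‖toEuclideanCLM (𝕜 := ℝ) A‖ * (x ⬝ᵥ x) := by rw [hu]; ring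

theorem dotProduct_one_sub_mulVec_nonneg [DecidableEq n] {Γ : Matrix n n ℝ}
    (hΓ : ‖toEuclideanCLM (𝕜 := ℝ) Γ‖ ≤ 1) (x : n → ℝ) : 0 ≤ x ⬝ᵥ (1 - Γ) *ᵥ x := by
  have hxx : 0 ≤ x ⬝ᵥ x := by simpa using dotProduct_star_self_nonneg x
  have hΓx := dotProduct_mulVec_le_norm_toEuclideanCLM_mul Γ x
  rw [sub_mulVec, one_mulVec, dotProduct_sub]
  nlinarith

theorem posSemidef_add_transpose_of_dotProduct_mulVec_nonneg {C : Matrix n n ℝ}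
    (hC : ∀ x, 0 ≤ x ⬝ᵥ C *ᵥ x) : (C + Cᵀ).PosSemidef := by
  refine .of_dotProduct_mulVec_nonneg ?_ fun x => ?_
  · simp [IsHermitian, add_comm]
  · have hT : x ⬝ᵥ Cᵀ *ᵥ x = x ⬝ᵥ C *ᵥ x := by
      rw [dotProduct_mulVec, vecMul_transpose, dotProduct_comm]
    rw [star_trivial, add_mulVec, dotProduct_add, hT]
    linarith [hC x]

variable [DecidableEq m] [DecidableEq n]

noncomputable def obliqueResidual [CommRing R] (X : Matrix n m R) (B : Matrix n n R) :
    Matrix n n R :=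
  1 - X * (Xᵀ * B * X)⁻¹ * (Xᵀ * B)

/-- When `XᵀBX` is singular, its inverse is `0` and `obliqueResidual X B = 1`, so the identity
holds trivially. -/
theorem transpose_obliqueResidual_mul_mul_obliqueResidual [CommRing R] (X : Matrix n m R)
    (B : Matrix n n R) :
    (obliqueResidual X B)ᵀ * (B * obliqueResidual X B) = B * obliqueResidual X B := by
  by_cases hS : IsUnit (Xᵀ * B * X).det
  · have hXB : Xᵀ * (B * obliqueResidual X B) = 0 := by
      simp only [obliqueResidual, Matrix.mul_sub, Matrix.mul_one, ← Matrix.mul_assoc,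
        mul_nonsing_inv _ hS, Matrix.one_mul, sub_self]
    have hMt : (obliqueResidual X B)ᵀ = 1 - Bᵀ * X * ((Xᵀ * B * X)⁻¹)ᵀ * Xᵀ := by
      simp [obliqueResidual, transpose_mul, Matrix.mul_assoc]
    rw [hMt, Matrix.sub_mul, Matrix.one_mul, Matrix.mul_assoc _ Xᵀ, hXB, Matrix.mul_zero,
      sub_zero]
  · simp [obliqueResidual, nonsing_inv_apply_not_isUnit _ hS]

theorem dotProduct_mul_obliqueResidual_mulVec_nonneg (X : Matrix n m ℝ) {B : Matrix n n ℝ}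
    (hB : ∀ x, 0 ≤ x ⬝ᵥ B *ᵥ x) (x : n → ℝ) :
    0 ≤ x ⬝ᵥ (B * obliqueResidual X B) *ᵥ x := by
  rw [← transpose_obliqueResidual_mul_mul_obliqueResidual, ← mulVec_mulVec, dotProduct_mulVec,
    vecMul_transpose, ← mulVec_mulVec]
  exact hB _

end Matrix

theorem oblique_residual_posSemidef_general {T K : ℕ}
    (X : Matrix (Fin T) (Fin K) ℝ) (Γ : Matrix (Fin T) (Fin T) ℝ)
    (hΓ : ‖toEuclideanCLM (𝕜 := ℝ) Γ‖ < 1)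
    (MΓ : Matrix (Fin T) (Fin T) ℝ)
    (hMΓ : MΓ = 1 - X * (Xᵀ * (1 - Γ) * X)⁻¹ * (Xᵀ * (1 - Γ))) :
    ((1 - Γ) * MΓ + MΓᵀ * (1 - Γᵀ)).PosSemidef := by
  have hsymm : MΓᵀ * (1 - Γᵀ) = ((1 - Γ) * MΓ)ᵀ := by
    rw [transpose_mul, transpose_sub, transpose_one]
  rw [hsymm, hMΓ]
  exact posSemidef_add_transpose_of_dotProduct_mulVec_nonneg
    (dotProduct_mul_obliqueResidual_mulVec_nonneg X (dotProduct_one_sub_mulVec_nonneg hΓ.le))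

/-- With `M_Γ = I − X(Xᵀ(I−Γ)X)⁻¹Xᵀ(I−Γ)` for `X` of full column rank and `‖Γ‖ < 1`,
the matrix `(I−Γ)M_Γ + M_Γᵀ(I−Γᵀ)` is positive semi-definite. -/
theorem oblique_residual_posSemidef {T K : ℕ}
    (X : Matrix (Fin T) (Fin K) ℝ) (Γ : Matrix (Fin T) (Fin T) ℝ)
    (hX : X.rank = K) (hΓ : ‖toEuclideanCLM (𝕜 := ℝ) Γ‖ < 1)
    (MΓ : Matrix (Fin T) (Fin T) ℝ)
    (hMΓ : MΓ = 1 - X * (Xᵀ * (1 - Γ) * X)⁻¹ * (Xᵀ * (1 - Γ))) :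
    ((1 - Γ) * MΓ + MΓᵀ * (1 - Γᵀ)).PosSemidef :=
  oblique_residual_posSemidef_general X Γ hΓ MΓ hMΓ
end

section
/- Let X and Z be T×K real matrices with ZᵀX invertible, partitioned as X = [X₁, X₂] and Z = [Z₁, Z₂] into blocks of K₁ and K₂ = K−K₁ columns. Assume Z₂ᵀX₂ and Z₁ᵀM₂X₁ are invertible, where M₂ = I − X₂(Z₂ᵀX₂)⁻¹Z₂ᵀ. Then for any r = (r₁ᵀ, 0ᵀ)ᵀ with r₁ ∈ ℝ^{K₁}, we have rᵀ(ZᵀX)⁻¹Zᵀ = r₁ᵀ(Z₁ᵀM₂X₁)⁻¹Z₁ᵀM₂. -/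
/-!
`ZᵀX` is the 2×2 block matrix with blocks `Zᵢᵀ Xⱼ`, and its Schur complement with respect to
`Z₂ᵀX₂` is exactly `S = Z₁ᵀM₂X₁`. The block-inverse formula makes `ZᵀX` invertible and gives
`S⁻¹ [I, −Z₁ᵀX₂(Z₂ᵀX₂)⁻¹]` as the first block row of its inverse; since `r` only sees that row,
multiplying by `Zᵀ = [Z₁ᵀ; Z₂ᵀ]` leaves `r₁ᵀ S⁻¹ (Z₁ᵀ − Z₁ᵀX₂(Z₂ᵀX₂)⁻¹Z₂ᵀ) = r₁ᵀ S⁻¹ Z₁ᵀM₂`.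
-/

open Matrix

namespace Matrix

variable {m n α : Type*} [Fintype m] [Fintype n] [DecidableEq m] [DecidableEq n] [CommRing α]

theorem inv_fromBlocks₂₂_eq {A : Matrix m m α} {B : Matrix m n α} {C : Matrix n m α}
    {D : Matrix n n α} (hD : IsUnit D) (hS : IsUnit (A - B * D⁻¹ * C)) :
    (fromBlocks A B C D)⁻¹ =
      fromBlocks (A - B * D⁻¹ * C)⁻¹ (-((A - B * D⁻¹ * C)⁻¹ * B * D⁻¹))
        (-(D⁻¹ * C * (A - B * D⁻¹ * C)⁻¹))
        (D⁻¹ + D⁻¹ * C * (A - B * D⁻¹ * C)⁻¹ * B * D⁻¹) := by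
  let := hD.invertible
  rw [← invOf_eq_nonsing_inv D] at hS ⊢
  let := hS.invertible
  let := fromBlocks₂₂Invertible A B C D
  simp only [← invOf_eq_nonsing_inv]
  exact invOf_fromBlocks₂₂_eq A B C D

end Matrix

theorem generalized_frisch_waugh_lovell_general {T K₁ K₂ : ℕ}
    (X₁ Z₁ : Matrix (Fin T) (Fin K₁) ℝ) (X₂ Z₂ : Matrix (Fin T) (Fin K₂) ℝ)
    (X Z : Matrix (Fin T) (Fin K₁ ⊕ Fin K₂) ℝ)
    (hXdef : X = fromCols X₁ X₂) (hZdef : Z = fromCols Z₁ Z₂)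
    (M₂ : Matrix (Fin T) (Fin T) ℝ)
    (hM₂ : M₂ = 1 - X₂ * (Z₂ᵀ * X₂)⁻¹ * Z₂ᵀ)
    (hZ₂X₂ : IsUnit (Z₂ᵀ * X₂))
    (hZ₁M₂X₁ : IsUnit (Z₁ᵀ * M₂ * X₁))
    (r₁ : Fin K₁ → ℝ) (r : Fin K₁ ⊕ Fin K₂ → ℝ)
    (hr : r = Sum.elim r₁ 0) :
    r ᵥ* ((Zᵀ * X)⁻¹ * Zᵀ) = r₁ ᵥ* ((Z₁ᵀ * M₂ * X₁)⁻¹ * (Z₁ᵀ * M₂)) := by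
  subst hXdef hZdef hr
  have hZ₁M₂ : Z₁ᵀ * M₂ = Z₁ᵀ - Z₁ᵀ * X₂ * (Z₂ᵀ * X₂)⁻¹ * Z₂ᵀ := by
    simp only [hM₂, Matrix.mul_sub, Matrix.mul_one, Matrix.mul_assoc]
  have hSchur : Z₁ᵀ * X₁ - Z₁ᵀ * X₂ * (Z₂ᵀ * X₂)⁻¹ * (Z₂ᵀ * X₁) = Z₁ᵀ * M₂ * X₁ := by
    simp only [hZ₁M₂, Matrix.sub_mul, Matrix.mul_assoc]
  rw [transpose_fromCols, fromRows_mul_fromCols, inv_fromBlocks₂₂_eq hZ₂X₂ (hSchur ▸ hZ₁M₂X₁),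
    fromBlocks_mul_fromRows, sumElim_vecMul_fromRows, zero_vecMul, add_zero, hSchur, hZ₁M₂]
  simp only [Matrix.neg_mul, ← sub_eq_add_neg, Matrix.mul_sub, Matrix.mul_assoc]

/-- Generalized Frisch–Waugh–Lovell for oblique (IV) projections: with `X = [X₁, X₂]`,
`Z = [Z₁, Z₂]`, `M₂ = I − X₂(Z₂ᵀX₂)⁻¹Z₂ᵀ`, and `r = (r₁ᵀ, 0ᵀ)ᵀ`,
`rᵀ(ZᵀX)⁻¹Zᵀ = r₁ᵀ(Z₁ᵀM₂X₁)⁻¹Z₁ᵀM₂`. -/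
theorem generalized_frisch_waugh_lovell {T K₁ K₂ : ℕ}
    (X₁ Z₁ : Matrix (Fin T) (Fin K₁) ℝ) (X₂ Z₂ : Matrix (Fin T) (Fin K₂) ℝ)
    (X Z : Matrix (Fin T) (Fin K₁ ⊕ Fin K₂) ℝ)
    (hXdef : X = fromCols X₁ X₂) (hZdef : Z = fromCols Z₁ Z₂)
    (M₂ : Matrix (Fin T) (Fin T) ℝ)
    (hM₂ : M₂ = 1 - X₂ * (Z₂ᵀ * X₂)⁻¹ * Z₂ᵀ)
    (hZX : IsUnit (Zᵀ * X)) (hZ₂X₂ : IsUnit (Z₂ᵀ * X₂))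
    (hZ₁M₂X₁ : IsUnit (Z₁ᵀ * M₂ * X₁))
    (r₁ : Fin K₁ → ℝ) (r : Fin K₁ ⊕ Fin K₂ → ℝ)
    (hr : r = Sum.elim r₁ 0) :
    r ᵥ* ((Zᵀ * X)⁻¹ * Zᵀ) = r₁ ᵥ* ((Z₁ᵀ * M₂ * X₁)⁻¹ * (Z₁ᵀ * M₂)) :=
  generalized_frisch_waugh_lovell_general X₁ Z₁ X₂ Z₂ X Z hXdef hZdef M₂ hM₂ hZ₂X₂ hZ₁M₂X₁ r₁ r hr
end

section
/- Let X ∈ ℝ^{T×K} have rank K, Γ ∈ ℝ^{T×T} with ‖Γ‖ < 1, and P_Γ = X(Xᵀ(I−Γ)X)⁻¹Xᵀ(I−Γ). Then for any T×T matrix A, |tr(A P_Γ)| ≤ K·‖A‖·(1+‖Γ‖)/(1−‖Γ‖). -/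
open Matrix

/-!
Writing `γ = ‖Γ‖`, the matrix `I - Γ` is coercive: `⟪w, (I - Γ) w⟫ ≥ (1 - γ) ‖w‖²`. The identity
`Pᵀ (I - Γ) P = Pᵀ (I - Γ)` then gives `(1 - γ) ‖P v‖² ≤ ⟪P v, (I - Γ) v⟫ ≤ (1 + γ) ‖P v‖ ‖v‖`,
so `‖P‖ ≤ (1 + γ) / (1 - γ)`. Since `P` has range in that of `X`, `P = Q Qᵀ P` for a matrix `Q`
with `K` orthonormal columns, and `tr (A P) = tr (Qᵀ (P A) Q)` is a sum of `K` terms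
`⟪q_i, P A q_i⟫`, each bounded by `‖P‖ ‖A‖`.
-/

section InnerProductSpace

variable {E : Type*} [NormedAddCommGroup E] [InnerProductSpace ℝ E]

open scoped RealInnerProductSpace

namespace ContinuousLinearMap

lemma one_sub_norm_mul_norm_sq_le_inner (G : E →L[ℝ] E) (w : E) :
    (1 - ‖G‖) * ‖w‖ ^ 2 ≤ ⟪w, w - G w⟫ := by
  have h := (real_inner_le_norm w (G w)).trans
    (mul_le_mul_of_nonneg_left (G.le_opNorm w) (norm_nonneg w))
  rw [inner_sub_right, real_inner_self_eq_norm_sq]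
  nlinarith

lemma norm_sub_apply_le (G : E →L[ℝ] E) (v : E) : ‖v - G v‖ ≤ (1 + ‖G‖) * ‖v‖ := by
  linarith [G.le_opNorm v, norm_sub_le v (G v)]

variable [CompleteSpace E]

lemma norm_le_of_star_mul_sub_mul_self_eq {G P : E →L[ℝ] E} (hG : ‖G‖ < 1)
    (hP : star P * (1 - G) * P = star P * (1 - G)) : ‖P‖ ≤ (1 + ‖G‖) / (1 - ‖G‖) := by
  have hγ : 0 < 1 - ‖G‖ := sub_pos.mpr hG
  refine P.opNorm_le_bound (div_nonneg (by positivity) hγ.le) fun v => ?_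
  have hinner : ⟪P v, P v - G (P v)⟫ = ⟪P v, v - G v⟫ := by
    simpa only [star_eq_adjoint, mul_apply_eq_comp, _root_.sub_apply, one_apply_eq_self,
      adjoint_inner_right] using congrArg (fun T => ⟪v, T v⟫) hP
  have hlower := G.one_sub_norm_mul_norm_sq_le_inner (P v)
  have hupper : ⟪P v, v - G v⟫ ≤ ‖P v‖ * ((1 + ‖G‖) * ‖v‖) :=
    (real_inner_le_norm _ _).trans
      (mul_le_mul_of_nonneg_left (G.norm_sub_apply_le v) (norm_nonneg _))
  rw [div_mul_eq_mul_div, le_div_iff₀ hγ]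
  rcases (norm_nonneg (P v)).eq_or_lt with h0 | hpos
  · rw [← h0, zero_mul]; positivity
  · nlinarith

end ContinuousLinearMap

end InnerProductSpace

namespace Matrix

variable {m n : Type*} [Fintype m] [Fintype n] [DecidableEq n]

noncomputable def obliqueProj (X : Matrix m n ℝ) (M : Matrix m m ℝ) : Matrix m m ℝ :=
  X * (Xᵀ * M * X)⁻¹ * (Xᵀ * M)

variable {X : Matrix m n ℝ} {M : Matrix m m ℝ}

lemma obliqueProj_eq_zero (h : ¬IsUnit (Xᵀ * M * X).det) : obliqueProj X M = 0 := by
  rw [obliqueProj, nonsing_inv_apply_not_isUnit _ h, Matrix.mul_zero, Matrix.zero_mul]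

lemma transpose_mul_mul_obliqueProj (h : IsUnit (Xᵀ * M * X).det) :
    Xᵀ * M * obliqueProj X M = Xᵀ * M := by
  simp only [obliqueProj, ← Matrix.mul_assoc]
  rw [mul_nonsing_inv _ h, Matrix.one_mul]

lemma obliqueProj_transpose_mul_mul_self (h : IsUnit (Xᵀ * M * X).det) :
    (obliqueProj X M)ᵀ * M * obliqueProj X M = (obliqueProj X M)ᵀ * M := by
  have hXM := transpose_mul_mul_obliqueProj h
  generalize hP : obliqueProj X M = P at hXM ⊢
  obtain rfl : P = X * ((Xᵀ * M * X)⁻¹ * (Xᵀ * M)) := hP ▸ Matrix.mul_assoc _ _ _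
  simp only [transpose_mul, Matrix.mul_assoc] at hXM ⊢
  rw [hXM]

lemma norm_toEuclideanCLM_obliqueProj_le [DecidableEq m] {G : Matrix m m ℝ}
    (hG : ‖toEuclideanCLM (𝕜 := ℝ) G‖ < 1) (h : IsUnit (Xᵀ * (1 - G) * X).det) :
    ‖toEuclideanCLM (𝕜 := ℝ) (obliqueProj X (1 - G))‖ ≤
      (1 + ‖toEuclideanCLM (𝕜 := ℝ) G‖) / (1 - ‖toEuclideanCLM (𝕜 := ℝ) G‖) := by
  have hP := congrArg (fun P => toEuclideanCLM (𝕜 := ℝ) P) (obliqueProj_transpose_mul_mul_self h)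
  rw [← conjTranspose_eq_transpose_of_trivial, ← star_eq_conjTranspose] at hP
  simp only [map_mul, map_sub, map_one, map_star] at hP
  exact ContinuousLinearMap.norm_le_of_star_mul_sub_mul_self_eq hG hP

lemma mul_obliqueProj_of_mul_eq {R : Matrix m m ℝ} (hR : R * X = X) :
    R * obliqueProj X M = obliqueProj X M := by
  simp only [obliqueProj, ← Matrix.mul_assoc, hR]

lemma isUnit_transpose_mul_self_of_isUnit_det (h : IsUnit (Xᵀ * M * X).det) :
    IsUnit (Xᵀ * X) := by
  have hX : Function.Injective X.mulVec := by
    refine Function.Injective.of_comp (f := (Xᵀ * M).mulVec) ?_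
    convert mulVec_injective_iff_isUnit.mpr ((isUnit_iff_isUnit_det _).mpr h) using 1
    funext v
    exact mulVec_mulVec v _ _
  refine mulVec_injective_iff_isUnit.mp ?_
  change Function.Injective (Xᵀ * X).mulVecLin
  rwa [← LinearMap.ker_eq_bot, ker_mulVecLin_transpose_mul_self, LinearMap.ker_eq_bot]

open scoped MatrixOrder in
lemma exists_transpose_mul_self_eq_one_of_isUnit (h : IsUnit (Xᵀ * X)) :
    ∃ Q : Matrix m n ℝ, Qᵀ * Q = 1 ∧ Q * Qᵀ * X = X := by
  have hG : 0 ≤ Xᵀ * X := by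
    simpa [conjTranspose_eq_transpose_of_trivial] using (posSemidef_conjTranspose_mul_self X).nonneg
  set S := CFC.sqrt (Xᵀ * X)
  have hSS : S * S = Xᵀ * X := CFC.sqrt_mul_sqrt_self _ hG
  have hST : Sᵀ = S := by
    have := IsSelfAdjoint.of_nonneg (CFC.sqrt_nonneg (Xᵀ * X))
    rwa [IsSelfAdjoint, star_eq_conjTranspose, conjTranspose_eq_transpose_of_trivial] at this
  have hS : IsUnit S.det := (isUnit_iff_isUnit_det S).mp ((CFC.isUnit_sqrt_iff _ hG).mpr h)
  have hQT : (X * S⁻¹)ᵀ = S⁻¹ * Xᵀ := by rw [transpose_mul, transpose_nonsing_inv, hST]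
  refine ⟨X * S⁻¹, ?_, ?_⟩
  · rw [hQT, Matrix.mul_assoc, ← Matrix.mul_assoc Xᵀ, ← hSS, mul_nonsing_inv_cancel_right S S hS,
      nonsing_inv_mul S hS]
  · simp only [hQT, Matrix.mul_assoc]
    rw [← hSS, nonsing_inv_mul_cancel_left S S hS, nonsing_inv_mul S hS, Matrix.mul_one]

open scoped RealInnerProductSpace in
lemma abs_trace_transpose_mul_mul_le [DecidableEq m] {Q : Matrix m n ℝ} (hQ : Qᵀ * Q = 1)
    (N : Matrix m m ℝ) :
    |(Qᵀ * N * Q).trace| ≤ Fintype.card n * ‖toEuclideanCLM (𝕜 := ℝ) N‖ := by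
  set L := toEuclideanCLM (𝕜 := ℝ) N
  let q : n → EuclideanSpace ℝ m := fun i => WithLp.toLp 2 (Qᵀ i)
  have hdiag (i : n) : (Qᵀ * N * Q) i i = ⟪q i, L (q i)⟫ := by
    rw [inner_toEuclideanCLM, Matrix.mul_assoc]
    simp [q, mul_apply, dotProduct, mulVec]
  have hq (i : n) : ‖q i‖ = 1 := by
    rw [← pow_eq_one_iff_of_nonneg (norm_nonneg _) two_ne_zero, ← real_inner_self_eq_norm_sq]
    rw [EuclideanSpace.inner_toLp_toLp]
    simpa [mul_apply, dotProduct] using congrFun (congrFun hQ i) i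
  have hterm (i : n) : |(Qᵀ * N * Q) i i| ≤ ‖L‖ := by
    rw [hdiag]
    calc |⟪q i, L (q i)⟫| ≤ ‖q i‖ * ‖L (q i)‖ := abs_real_inner_le_norm _ _
      _ ≤ ‖q i‖ * (‖L‖ * ‖q i‖) := by gcongr; exact L.le_opNorm _
      _ = ‖L‖ := by rw [hq]; ring
  calc |(Qᵀ * N * Q).trace| ≤ ∑ i, |(Qᵀ * N * Q) i i| := Finset.abs_sum_le_sum_abs _ _
    _ ≤ ∑ _i : n, ‖L‖ := Finset.sum_le_sum fun i _ => hterm i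
    _ = Fintype.card n * ‖L‖ := by simp

end Matrix

theorem abs_trace_mul_oblique_proj_le_general {T K : ℕ}
    (X : Matrix (Fin T) (Fin K) ℝ) (Γ : Matrix (Fin T) (Fin T) ℝ)
    (hΓ : ‖toEuclideanCLM (𝕜 := ℝ) Γ‖ < 1)
    (PΓ : Matrix (Fin T) (Fin T) ℝ)
    (hPΓ : PΓ = X * (Xᵀ * (1 - Γ) * X)⁻¹ * (Xᵀ * (1 - Γ)))
    (A : Matrix (Fin T) (Fin T) ℝ) :
    |(A * PΓ).trace| ≤
      (K : ℝ) * ‖toEuclideanCLM (𝕜 := ℝ) A‖ *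
        ((1 + ‖toEuclideanCLM (𝕜 := ℝ) Γ‖) / (1 - ‖toEuclideanCLM (𝕜 := ℝ) Γ‖)) := by
  set γ := ‖toEuclideanCLM (𝕜 := ℝ) Γ‖
  change PΓ = obliqueProj X (1 - Γ) at hPΓ
  subst hPΓ
  by_cases hB : IsUnit (Xᵀ * (1 - Γ) * X).det
  swap
  · -- Mathlib's `B⁻¹` is `0` for singular `B`, and then so is `P_Γ`.
    rw [obliqueProj_eq_zero hB, Matrix.mul_zero, trace_zero, abs_zero]
    exact mul_nonneg (by positivity) (div_nonneg (by positivity) (by linarith))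
  obtain ⟨Q, hQ, hQX⟩ :=
    exists_transpose_mul_self_eq_one_of_isUnit (isUnit_transpose_mul_self_of_isUnit_det hB)
  set P := obliqueProj X (1 - Γ)
  have hQP : Q * Qᵀ * P = P := mul_obliqueProj_of_mul_eq hQX
  calc |(A * P).trace| = |(Qᵀ * (P * A) * Q).trace| := by
        conv_lhs => rw [← hQP, Matrix.mul_assoc Q, ← Matrix.mul_assoc A, trace_mul_comm]
        simp only [Matrix.mul_assoc]
    _ ≤ K * ‖toEuclideanCLM (𝕜 := ℝ) (P * A)‖ := by
        simpa using abs_trace_transpose_mul_mul_le hQ (P * A)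
    _ ≤ K * (‖toEuclideanCLM (𝕜 := ℝ) P‖ * ‖toEuclideanCLM (𝕜 := ℝ) A‖) := by
        rw [map_mul]
        gcongr
        exact norm_mul_le _ _
    _ ≤ K * ((1 + γ) / (1 - γ) * ‖toEuclideanCLM (𝕜 := ℝ) A‖) := by
        gcongr
        exact norm_toEuclideanCLM_obliqueProj_le hΓ hB
    _ = _ := by ring

/-- For the oblique projection `P_Γ = X(Xᵀ(I−Γ)X)⁻¹Xᵀ(I−Γ)` with `X` of rank `K`
and `‖Γ‖ < 1`, one has `|tr(A P_Γ)| ≤ K·‖A‖·(1+‖Γ‖)/(1−‖Γ‖)` for any `A`. -/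
theorem abs_trace_mul_oblique_proj_le {T K : ℕ}
    (X : Matrix (Fin T) (Fin K) ℝ) (Γ : Matrix (Fin T) (Fin T) ℝ)
    (hX : X.rank = K) (hΓ : ‖toEuclideanCLM (𝕜 := ℝ) Γ‖ < 1)
    (PΓ : Matrix (Fin T) (Fin T) ℝ)
    (hPΓ : PΓ = X * (Xᵀ * (1 - Γ) * X)⁻¹ * (Xᵀ * (1 - Γ)))
    (A : Matrix (Fin T) (Fin T) ℝ) :
    |(A * PΓ).trace| ≤
      (K : ℝ) * ‖toEuclideanCLM (𝕜 := ℝ) A‖ *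
        ((1 + ‖toEuclideanCLM (𝕜 := ℝ) Γ‖) / (1 - ‖toEuclideanCLM (𝕜 := ℝ) Γ‖)) :=
  abs_trace_mul_oblique_proj_le_general X Γ hΓ PΓ hPΓ A
end
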